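/- For any knot sequence in which no inner knot has multiplicity greater than m (m ≥ 1), for every index i with −m−1 ≤ i ≤ n−1 (using the convention N_{m,q} ≡ 0 for q < −m or q ≥ n), and for every u ∈ ℝ that is not equal to any of the knots t_{−m}, …, t_{n+m}, the following differential-recurrence relation between B-spline functions of the same degree holds: N_{m,i}(u) + ((t_i − u)/m)·N′_{m,i}(u) = ((t_{m+i+1} − t_i)/(t_{m+i+2} − t_{i+1}))·( N_{m,i+1}(u) + ((t_{m+i+2} − u)/m)·N′_{m,i+1}(u) ), where a fraction whose denominator vanishes is replaced by 0. -/

import Mathlib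

/-- The B-spline basis functions `N_{p,i}` of degree `p` over the knot
sequence `t`, defined by the de Boor–Cox recursion, with the conventions that
a fraction with vanishing denominator is replaced by `0` (automatic for real
division in Lean) and that `N_{p,q} ≡ 0` whenever `q < -p` or `q ≥ n`. -/
noncomputable def bspline (t : ℤ → ℝ) (n : ℕ) : ℕ → ℤ → ℝ → ℝ
  | 0 => fun i u =>
      if 0 ≤ i ∧ i < (n : ℤ) ∧ t i ≤ u ∧ u < t (i + 1) then 1 else 0
  | p + 1 => fun i u =>
      if -((p : ℤ) + 1) ≤ i ∧ i < (n : ℤ) then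
        (u - t i) / (t ((p : ℤ) + 1 + i) - t i) * bspline t n p i u
          + (t ((p : ℤ) + 1 + i + 1) - u) / (t ((p : ℤ) + 1 + i + 1) - t (i + 1))
              * bspline t n p (i + 1) u
      else 0

/-- The `k`-th Bernstein basis polynomial of degree `p`. -/
noncomputable def bern (p k : ℕ) (x : ℝ) : ℝ :=
  (p.choose k : ℝ) * x ^ k * (1 - x) ^ (p - k)

/-!
At a point `u` that is not a knot, `N_{0,i}` is locally constant, and differentiating the
de Boor–Cox recursion gives by induction the classical formula
`N'_{p+1,i} = (p+1) (N_{p,i} / (t_{p+1+i} - t_i) - N_{p,i+1} / (t_{p+2+i} - t_{i+1}))`;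
the induction step needs monotone knots to cancel the `N_{p,i+1}`-terms. Inserting this formula
and the recursion, the left side of the theorem collapses to
`(t_{m+i+1} - t_i) / (t_{m+i+1} - t_{i+1}) N_{m-1,i+1}(u)` and the bracket on the right to
`(t_{m+i+2} - t_{i+1}) / (t_{m+i+1} - t_{i+1}) N_{m-1,i+1}(u)`. By monotonicity,
`t_{m+i+2} = t_{i+1}` forces `t_{m+i+1} = t_{i+1}`, where both sides vanish; otherwise the common
factor `t_{m+i+2} - t_{i+1}` cancels.
-/

open Topology

lemma eventually_lt_iff_of_ne {α : Type*} [LinearOrder α] [TopologicalSpace α] [OrderTopology α]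
    {a u : α} (h : u ≠ a) : ∀ᶠ v in 𝓝 u, (v < a ↔ u < a) := by
  rcases h.lt_or_gt with h | h
  · filter_upwards [eventually_lt_nhds h] with v hv using iff_of_true hv h
  · filter_upwards [eventually_gt_nhds h] with v hv using iff_of_false hv.not_gt h.not_gt

section

variable {t : ℤ → ℝ} {n : ℕ}

lemma index_bounds_of_bspline_ne_zero {p : ℕ} {j : ℤ} {u : ℝ} (h : bspline t n p j u ≠ 0) :
    -(p : ℤ) ≤ j ∧ j < n := by
  cases p with
  | zero =>
    simp only [bspline, ne_eq, ite_eq_right_iff, one_ne_zero, imp_false, not_not] at h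
    exact ⟨by omega, h.2.1⟩
  | succ p =>
    simp only [bspline, ne_eq, ite_eq_right_iff, not_forall] at h
    obtain ⟨hj, -⟩ := h
    push_cast
    exact hj

lemma bspline_eq_zero_of_not_index_bounds {p : ℕ} {j : ℤ} (h : ¬(-(p : ℤ) ≤ j ∧ j < n))
    (u : ℝ) : bspline t n p j u = 0 :=
  by_contra (h ∘ index_bounds_of_bspline_ne_zero)

lemma bspline_succ (p : ℕ) (i : ℤ) (u : ℝ) :
    bspline t n (p + 1) i u =
      (u - t i) / (t ((p : ℤ) + 1 + i) - t i) * bspline t n p i u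
        + (t ((p : ℤ) + 1 + i + 1) - u) / (t ((p : ℤ) + 1 + i + 1) - t (i + 1))
            * bspline t n p (i + 1) u := by
  simp only [bspline]
  split_ifs with hi
  · rfl
  · rw [bspline_eq_zero_of_not_index_bounds (by omega),
      bspline_eq_zero_of_not_index_bounds (by omega)]
    ring

lemma hasDerivAt_bspline_zero {u : ℝ} (hu : ∀ k : ℤ, 0 ≤ k → k ≤ n → u ≠ t k) (i : ℤ) :
    HasDerivAt (bspline t n 0 i) 0 u := by
  refine (hasDerivAt_const u (bspline t n 0 i u)).congr_of_eventuallyEq ?_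
  by_cases hi : 0 ≤ i ∧ i < (n : ℤ)
  · filter_upwards [eventually_lt_iff_of_ne (hu i hi.1 hi.2.le),
      eventually_lt_iff_of_ne (hu (i + 1) (by omega) (by omega))] with v hvi hvi₁
    simp only [bspline, ← not_lt, hvi, hvi₁]
  · filter_upwards with v
    rw [bspline_eq_zero_of_not_index_bounds (by omega),
      bspline_eq_zero_of_not_index_bounds (by omega)]

lemma hasDerivAt_bspline_succ_of_hasDerivAt {p : ℕ} {i : ℤ} {u D D' : ℝ}
    (h : HasDerivAt (bspline t n p i) D u) (h' : HasDerivAt (bspline t n p (i + 1)) D' u) :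
    HasDerivAt (bspline t n (p + 1) i)
      (bspline t n p i u / (t ((p : ℤ) + 1 + i) - t i)
        + (u - t i) / (t ((p : ℤ) + 1 + i) - t i) * D
        - bspline t n p (i + 1) u / (t ((p : ℤ) + 1 + i + 1) - t (i + 1))
        + (t ((p : ℤ) + 1 + i + 1) - u) / (t ((p : ℤ) + 1 + i + 1) - t (i + 1)) * D') u := by
  have hl : HasDerivAt (fun v => (v - t i) / (t ((p : ℤ) + 1 + i) - t i))
      (1 / (t ((p : ℤ) + 1 + i) - t i)) u :=
    ((hasDerivAt_id' u).sub_const _).div_const _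
  have hr : HasDerivAt
      (fun v => (t ((p : ℤ) + 1 + i + 1) - v) / (t ((p : ℤ) + 1 + i + 1) - t (i + 1)))
      (-1 / (t ((p : ℤ) + 1 + i + 1) - t (i + 1))) u :=
    ((hasDerivAt_id' u).const_sub _).div_const _
  rw [show bspline t n (p + 1) i = _ from funext (bspline_succ p i)]
  exact ((hl.mul h).add (hr.mul h')).congr_deriv (by ring)

lemma bspline_succ_div_sub_div (p : ℕ) (ht : MonotoneOn t (Set.Icc (-(p : ℤ) - 1) (n + p + 1)))
    (i : ℤ) (u : ℝ) :
    bspline t n (p + 1) i u / (t ((p : ℤ) + 1 + 1 + i) - t i)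
        - bspline t n (p + 1) (i + 1) u / (t ((p : ℤ) + 1 + 1 + i + 1) - t (i + 1))
      = (u - t i) / (t ((p : ℤ) + 1 + 1 + i) - t i)
          * (bspline t n p i u / (t ((p : ℤ) + 1 + i) - t i)
            - bspline t n p (i + 1) u / (t ((p : ℤ) + 1 + i + 1) - t (i + 1)))
        + (t ((p : ℤ) + 1 + 1 + i + 1) - u) / (t ((p : ℤ) + 1 + 1 + i + 1) - t (i + 1))
          * (bspline t n p (i + 1) u / (t ((p : ℤ) + 1 + (i + 1)) - t (i + 1))
            - bspline t n p (i + 1 + 1) u / (t ((p : ℤ) + 1 + (i + 1) + 1) - t (i + 1 + 1))) := by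
  rw [bspline_succ p i, bspline_succ p (i + 1),
    show (p : ℤ) + 1 + (i + 1) = p + 1 + i + 1 by ring,
    show (p : ℤ) + 1 + 1 + i = p + 1 + i + 1 by ring]
  by_cases hN : bspline t n p (i + 1) u = 0
  · rw [hN]; ring
  obtain ⟨hi₁, hi₂⟩ := index_bounds_of_bspline_ne_zero hN
  have hle : ∀ k l, -(p : ℤ) - 1 ≤ k → k ≤ l → l ≤ n + p + 1 → t k ≤ t l :=
    fun k l hk hkl hl => ht ⟨hk, by omega⟩ ⟨by omega, hl⟩ hkl
  have h₁ := hle i (i + 1) (by omega) (by omega) (by omega)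
  have h₂ := hle (p + 1 + i + 1) (p + 1 + i + 1 + 1) (by omega) (by omega) (by omega)
  rcases (hle (i + 1) (p + 1 + i + 1) (by omega) (by omega) (by omega)).eq_or_lt with he | he
  · rw [he, sub_self, div_zero, div_zero]; ring
  -- `t_{i+1} < t_{p+i+2}` forces both outer denominators to be positive, and then the
  -- `N_{p,i+1}`-terms cancel.
  have hd₁ : t (p + 1 + i + 1) - t i ≠ 0 := by linarith
  have hd₂ : t (p + 1 + i + 1 + 1) - t (i + 1) ≠ 0 := by linarith
  field_simp
  ring

theorem hasDerivAt_bspline_succ {u : ℝ} (hu : ∀ k : ℤ, 0 ≤ k → k ≤ n → u ≠ t k) (p : ℕ)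
    (ht : MonotoneOn t (Set.Icc (-(p : ℤ)) (n + p))) (i : ℤ) :
    HasDerivAt (bspline t n (p + 1) i)
      (((p : ℝ) + 1) * (bspline t n p i u / (t ((p : ℤ) + 1 + i) - t i)
        - bspline t n p (i + 1) u / (t ((p : ℤ) + 1 + i + 1) - t (i + 1)))) u := by
  induction p generalizing i with
  | zero =>
    exact (hasDerivAt_bspline_succ_of_hasDerivAt (hasDerivAt_bspline_zero hu i)
      (hasDerivAt_bspline_zero hu (i + 1))).congr_deriv (by ring)
  | succ p ih =>
    have ht' : MonotoneOn t (Set.Icc (-(p : ℤ)) (n + p)) :=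
      ht.mono (Set.Icc_subset_Icc (by omega) (by omega))
    refine (hasDerivAt_bspline_succ_of_hasDerivAt (ih ht' i) (ih ht' (i + 1))).congr_deriv ?_
    push_cast at ht ⊢
    linear_combination (-((p : ℝ) + 1)) * bspline_succ_div_sub_div (n := n) p
      (ht.mono (Set.Icc_subset_Icc (by omega) (by omega))) i u

lemma bspline_succ_add_sub_mul_deriv_left (p : ℕ) (i : ℤ) (u : ℝ) :
    bspline t n (p + 1) i u + (t i - u) / ((p : ℝ) + 1)
        * (((p : ℝ) + 1) * (bspline t n p i u / (t ((p : ℤ) + 1 + i) - t i)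
          - bspline t n p (i + 1) u / (t ((p : ℤ) + 1 + i + 1) - t (i + 1))))
      = (t ((p : ℤ) + 1 + i + 1) - t i) / (t ((p : ℤ) + 1 + i + 1) - t (i + 1))
          * bspline t n p (i + 1) u := by
  rw [bspline_succ]
  field_simp
  ring

lemma bspline_succ_add_sub_mul_deriv_right (p : ℕ) (i : ℤ) (u : ℝ) :
    bspline t n (p + 1) i u + (t ((p : ℤ) + 1 + i + 1) - u) / ((p : ℝ) + 1)
        * (((p : ℝ) + 1) * (bspline t n p i u / (t ((p : ℤ) + 1 + i) - t i)
          - bspline t n p (i + 1) u / (t ((p : ℤ) + 1 + i + 1) - t (i + 1))))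
      = (t ((p : ℤ) + 1 + i + 1) - t i) / (t ((p : ℤ) + 1 + i) - t i) * bspline t n p i u := by
  rw [bspline_succ]
  field_simp
  ring

lemma div_mul_bspline_eq_div_mul_div_mul_bspline (p : ℕ)
    (ht : MonotoneOn t (Set.Icc (-(p : ℤ)) (n + p + 1))) (a : ℝ) (j : ℤ) (u : ℝ) :
    a / (t ((p : ℤ) + 1 + j) - t j) * bspline t n p j u
      = a / (t ((p : ℤ) + 1 + j + 1) - t j)
          * ((t ((p : ℤ) + 1 + j + 1) - t j) / (t ((p : ℤ) + 1 + j) - t j) * bspline t n p j u) := by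
  by_cases hN : bspline t n p j u = 0
  · simp [hN]
  obtain ⟨hj₁, hj₂⟩ := index_bounds_of_bspline_ne_zero hN
  have h₁ : t j ≤ t ((p : ℤ) + 1 + j) := ht ⟨hj₁, by omega⟩ ⟨by omega, by omega⟩ (by omega)
  have h₂ : t ((p : ℤ) + 1 + j) ≤ t ((p : ℤ) + 1 + j + 1) :=
    ht ⟨by omega, by omega⟩ ⟨by omega, by omega⟩ (by omega)
  rcases h₁.eq_or_lt with h | h
  · simp only [h, sub_self, div_zero, zero_mul, mul_zero]
  · have hb : t ((p : ℤ) + 1 + j + 1) - t j ≠ 0 := by linarith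
    rw [← mul_assoc, div_mul_div_cancel₀ hb]

end

theorem bspline_diff_rec_same_degree_general
    (m n : ℕ) (hm : 1 ≤ m) (t : ℤ → ℝ)
    (hmono : ∀ k l : ℤ, -(m : ℤ) ≤ k → k ≤ l → l ≤ (n : ℤ) + m → t k ≤ t l)
    (i : ℤ)
    (u : ℝ) (hu : ∀ k : ℤ, -(m : ℤ) ≤ k → k ≤ (n : ℤ) + m → u ≠ t k) :
    bspline t n m i u + ((t i - u) / m) * deriv (bspline t n m i) u
      = (t ((m : ℤ) + i + 1) - t i) / (t ((m : ℤ) + i + 2) - t (i + 1))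
          * (bspline t n m (i + 1) u
              + ((t ((m : ℤ) + i + 2) - u) / m) * deriv (bspline t n m (i + 1)) u) := by
  have ht : MonotoneOn t (Set.Icc (-(m : ℤ)) (n + m)) := fun k hk l hl hkl =>
    hmono k l hk.1 hkl hl.2
  have hu₀ : ∀ k : ℤ, 0 ≤ k → k ≤ n → u ≠ t k := fun k h₀ h₁ => hu k (by omega) (by omega)
  obtain ⟨p, rfl⟩ : ∃ p, m = p + 1 := ⟨m - 1, by omega⟩
  push_cast at ht
  have ht' : MonotoneOn t (Set.Icc (-(p : ℤ)) (n + p)) :=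
    ht.mono (Set.Icc_subset_Icc (by omega) (by omega))
  rw [(hasDerivAt_bspline_succ hu₀ p ht' i).deriv,
    (hasDerivAt_bspline_succ hu₀ p ht' (i + 1)).deriv, Nat.cast_succ,
    bspline_succ_add_sub_mul_deriv_left,
    show ((p + 1 : ℕ) : ℤ) + i + 1 = p + 1 + (i + 1) by push_cast; ring,
    show ((p + 1 : ℕ) : ℤ) + i + 2 = p + 1 + (i + 1) + 1 by push_cast; ring,
    show (p : ℤ) + 1 + i + 1 = p + 1 + (i + 1) by ring, bspline_succ_add_sub_mul_deriv_right]
  exact div_mul_bspline_eq_div_mul_div_mul_bspline p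
    (ht.mono (Set.Icc_subset_Icc (by omega) (by omega))) _ (i + 1) u

/-- the differential-recurrence relation between B-spline
functions of the same degree `m`, for an arbitrary knot sequence in which no
inner knot has multiplicity greater than `m`:
`N_{m,i}(u) + ((t_i − u)/m)·N′_{m,i}(u)
   = ((t_{m+i+1} − t_i)/(t_{m+i+2} − t_{i+1}))
        ·(N_{m,i+1}(u) + ((t_{m+i+2} − u)/m)·N′_{m,i+1}(u))`
for `−m−1 ≤ i ≤ n−1` and every `u` which is not a knot (fractions with
vanishing denominator are `0`, which is automatic for real division). -/
theorem bspline_diff_rec_same_degree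
    (m n : ℕ) (hm : 1 ≤ m) (hn : 1 ≤ n) (t : ℤ → ℝ)
    (hmono : ∀ k l : ℤ, -(m : ℤ) ≤ k → k ≤ l → l ≤ (n : ℤ) + m → t k ≤ t l)
    (h0n : t 0 < t n)
    (hmult : ∀ r : ℤ, 1 ≤ r → r ≤ (n : ℤ) - 1 →
      ((Finset.Icc (-(m : ℤ)) ((n : ℤ) + m)).filter (fun k => t k = t r)).card ≤ m)
    (i : ℤ) (hi1 : -(m : ℤ) - 1 ≤ i) (hi2 : i ≤ (n : ℤ) - 1)
    (u : ℝ) (hu : ∀ k : ℤ, -(m : ℤ) ≤ k → k ≤ (n : ℤ) + m → u ≠ t k) :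
    bspline t n m i u + ((t i - u) / m) * deriv (bspline t n m i) u
      = (t ((m : ℤ) + i + 1) - t i) / (t ((m : ℤ) + i + 2) - t (i + 1))
          * (bspline t n m (i + 1) u
              + ((t ((m : ℤ) + i + 2) - u) / m) * deriv (bspline t n m (i + 1)) u) :=
  bspline_diff_rec_same_degree_general m n hm t hmono i u hu
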